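/- arXiv:1709.02212 — 7 statements merged into one kernel-verified Lean document; each statement's English description precedes it below -/
import Mathlib

section
/- Let A be an n×n real symmetric matrix with n ≥ 2, and let A′ be the (n−1)×(n−1) matrix obtained from A by deleting its i-th row and i-th column, for some index i. If λ₁(A) ≥ λ₂(A) ≥ ⋯ ≥ λₙ(A) denote the eigenvalues of A in nonincreasing order and λ₁(A′) ≥ ⋯ ≥ λ_{n−1}(A′) those of A′, then λₖ(A) ≥ λₖ(A′) ≥ λ_{k+1}(A) for every k ∈ {1, …, n−1}. -/
/-!
Deleting row and column `i` of `A` is compressing the quadratic form `x ↦ ⟪A x, x⟫` to the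
hyperplane `x i = 0`, which carries the quadratic form of `A'`. If `A'` has all eigenvalues `≥ a`
on a span of `p` of its eigenvectors and `A` has all eigenvalues `≤ b` on a span of `q` of its
eigenvectors with `p + q > n + 1`, these two subspaces of `ℝⁿ⁺¹` (the first embedded in the
hyperplane) meet in some `x ≠ 0`, and `a ‖x‖² ≤ ⟪A x, x⟫ ≤ b ‖x‖²` forces `a ≤ b`. The top `k + 1`
eigenvectors of `A'` against the bottom `n + 1 - k` of `A` give `μ' k ≤ μ k`, and the same count
with the roles of top and bottom exchanged gives `μ (k + 1) ≤ μ' k`.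
-/

open scoped InnerProductSpace

theorem Antitone.sort_map_univ_val {α : Type*} [LinearOrder α] {n : ℕ} {f : Fin n → α}
    (hf : Antitone f) : (Finset.univ.val.map f).sort (· ≥ ·) = List.ofFn f := by
  rw [Fin.univ_val_map, Multiset.coe_sort]
  apply List.mergeSort_of_pairwise
  simp_rw [decide_eq_true_eq, ← List.sortedGE_iff_pairwise]
  exact hf.sortedGE_ofFn

section Rayleigh

variable {E ι : Type*} [NormedAddCommGroup E] [InnerProductSpace ℝ E] [Fintype ι]
  {T : E →ₗ[ℝ] E} {v : OrthonormalBasis ι ℝ E} {μ : ι → ℝ}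

theorem inner_apply_self_eq_sum (hv : ∀ j, T (v j) = μ j • v j) (x : E) :
    ⟪T x, x⟫_ℝ = ∑ j, μ j * ⟪v j, x⟫_ℝ ^ 2 := by
  nth_rw 1 [← v.sum_repr' x]
  simp only [map_sum, map_smul, hv, sum_inner, real_inner_smul_left, smul_smul]
  exact Finset.sum_congr rfl fun j _ => by rw [real_inner_comm]; ring

theorem OrthonormalBasis.inner_eq_zero_of_mem_span (v : OrthonormalBasis ι ℝ E) {I : Finset ι}
    {x : E} (hx : x ∈ Submodule.span ℝ (v '' I)) {j : ι} (hj : j ∉ I) : ⟪v j, x⟫_ℝ = 0 := by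
  induction hx using Submodule.span_induction with
  | mem z hz =>
    obtain ⟨l, hl, rfl⟩ := hz
    exact v.orthonormal.2 fun h => hj (h ▸ hl)
  | zero => simp
  | add a b _ _ ha hb => rw [inner_add_right, ha, hb, add_zero]
  | smul c a _ ha => rw [real_inner_smul_right, ha, mul_zero]

theorem le_inner_apply_self_of_mem_span (hv : ∀ j, T (v j) = μ j • v j) {I : Finset ι} {c : ℝ}
    (hc : ∀ j ∈ I, c ≤ μ j) {x : E} (hx : x ∈ Submodule.span ℝ (v '' I)) :
    c * ‖x‖ ^ 2 ≤ ⟪T x, x⟫_ℝ := by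
  rw [inner_apply_self_eq_sum hv, ← v.sum_sq_inner_right, Finset.mul_sum]
  refine Finset.sum_le_sum fun j _ => ?_
  by_cases hj : j ∈ I
  · exact mul_le_mul_of_nonneg_right (hc j hj) (sq_nonneg _)
  · simp [v.inner_eq_zero_of_mem_span hx hj]

theorem inner_apply_self_le_of_mem_span (hv : ∀ j, T (v j) = μ j • v j) {I : Finset ι} {c : ℝ}
    (hc : ∀ j ∈ I, μ j ≤ c) {x : E} (hx : x ∈ Submodule.span ℝ (v '' I)) :
    ⟪T x, x⟫_ℝ ≤ c * ‖x‖ ^ 2 := by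
  have := le_inner_apply_self_of_mem_span (T := -T) (μ := -μ)
    (fun j => by simp [hv, neg_smul]) (c := -c) (fun j hj => neg_le_neg (hc j hj)) hx
  simp only [LinearMap.neg_apply, inner_neg_left] at this
  linarith

theorem OrthonormalBasis.finrank_span_image (v : OrthonormalBasis ι ℝ E) (I : Finset ι) :
    Module.finrank ℝ (Submodule.span ℝ (v '' I)) = I.card := by
  rw [Set.image_eq_range, finrank_span_eq_card]
  · simp
  · exact v.orthonormal.linearIndependent.comp _ Subtype.coe_injective

end Rayleigh

theorem Submodule.exists_mem_inf_ne_zero_of_finrank_lt {K V : Type*} [DivisionRing K]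
    [AddCommGroup V] [Module K V] [FiniteDimensional K V] (W U : Submodule K V)
    (h : Module.finrank K V < Module.finrank K W + Module.finrank K U) :
    ∃ x ∈ W ⊓ U, x ≠ 0 := by
  rw [← Submodule.ne_bot_iff, Ne, ← Submodule.finrank_eq_zero]
  have := Submodule.finrank_sup_add_finrank_inf_eq W U
  have := Submodule.finrank_le (W ⊔ U)
  omega

section Compression

variable {E F ι κ : Type*} [NormedAddCommGroup E] [InnerProductSpace ℝ E]
  [NormedAddCommGroup F] [InnerProductSpace ℝ F]

def IsCompression (T : E →ₗ[ℝ] E) (S : F →ₗ[ℝ] F) (J : F →ₗᵢ[ℝ] E) : Prop :=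
  ∀ y, ⟪T (J y), J y⟫_ℝ = ⟪S y, y⟫_ℝ

theorem IsCompression.neg {T : E →ₗ[ℝ] E} {S : F →ₗ[ℝ] F} {J : F →ₗᵢ[ℝ] E}
    (h : IsCompression T S J) : IsCompression (-T) (-S) J := fun y => by
  simp [h y]

variable [FiniteDimensional ℝ E] [Fintype ι] [Fintype κ] {T : E →ₗ[ℝ] E} {S : F →ₗ[ℝ] F}
  {J : F →ₗᵢ[ℝ] E} {v : OrthonormalBasis ι ℝ E} {μ : ι → ℝ} {w : OrthonormalBasis κ ℝ F}
  {ν : κ → ℝ} {I : Finset ι} {K : Finset κ} {a b : ℝ}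

theorem IsCompression.le_of_finrank_lt_card_add_card (h : IsCompression T S J)
    (hv : ∀ j, T (v j) = μ j • v j) (hw : ∀ k, S (w k) = ν k • w k)
    (hcard : Module.finrank ℝ E < K.card + I.card)
    (hK : ∀ k ∈ K, a ≤ ν k) (hI : ∀ j ∈ I, μ j ≤ b) : a ≤ b := by
  obtain ⟨x, ⟨hxK, hxI⟩, hx0⟩ := Submodule.exists_mem_inf_ne_zero_of_finrank_lt
    ((Submodule.span ℝ (w '' K)).map J.toLinearMap) (Submodule.span ℝ (v '' I)) (by
      rwa [← (Submodule.equivMapOfInjective _ J.injective _).finrank_eq, w.finrank_span_image,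
        v.finrank_span_image])
  obtain ⟨y, hyK, rfl⟩ := Submodule.mem_map.mp hxK
  have hpos : 0 < ‖J y‖ ^ 2 := by positivity
  have hbound := calc a * ‖J y‖ ^ 2 = a * ‖y‖ ^ 2 := by rw [J.norm_map]
    _ ≤ ⟪S y, y⟫_ℝ := le_inner_apply_self_of_mem_span hw hK hyK
    _ = ⟪T (J y), J y⟫_ℝ := (h y).symm
    _ ≤ b * ‖J y‖ ^ 2 := inner_apply_self_le_of_mem_span hv hI hxI
  exact le_of_mul_le_mul_right hbound hpos

theorem IsCompression.le_of_finrank_lt_card_add_card' (h : IsCompression T S J)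
    (hv : ∀ j, T (v j) = μ j • v j) (hw : ∀ k, S (w k) = ν k • w k)
    (hcard : Module.finrank ℝ E < K.card + I.card)
    (hK : ∀ k ∈ K, ν k ≤ a) (hI : ∀ j ∈ I, b ≤ μ j) : b ≤ a :=
  neg_le_neg_iff.mp <| h.neg.le_of_finrank_lt_card_add_card (v := v) (μ := -μ) (w := w) (ν := -ν)
    (fun j => by simp [hv]) (fun k => by simp [hw]) hcard
    (fun k hk => neg_le_neg (hK k hk)) (fun j hj => neg_le_neg (hI j hj))

end Compression

noncomputable def EuclideanSpace.insertNthZero {𝕜 : Type*} [RCLike 𝕜] {n : ℕ}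
    (i : Fin (n + 1)) :
    EuclideanSpace 𝕜 (Fin n) →ₗᵢ[𝕜] EuclideanSpace 𝕜 (Fin (n + 1)) where
  toFun y := WithLp.toLp 2 (i.insertNth 0 y)
  map_add' x y := by
    ext j
    refine Fin.succAboveCases i ?_ (fun k => ?_) j <;> simp
  map_smul' c x := by
    ext j
    refine Fin.succAboveCases i ?_ (fun k => ?_) j <;> simp
  norm_map' y := by simp [EuclideanSpace.norm_eq, Fin.sum_univ_succAbove _ i]

theorem Matrix.isCompression_submatrix_succAbove {n : ℕ}
    (A : Matrix (Fin (n + 1)) (Fin (n + 1)) ℝ) (i : Fin (n + 1)) :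
    IsCompression (toEuclideanLin A) (toEuclideanLin (A.submatrix i.succAbove i.succAbove))
      (EuclideanSpace.insertNthZero i) := fun y => by
  simp [EuclideanSpace.insertNthZero, toLpLin_apply, mulVec, dotProduct, PiLp.inner_apply,
    Fin.sum_univ_succAbove _ i]

theorem Matrix.IsSymm.exists_orthonormalBasis_apply_eq_smul {N : ℕ}
    {A : Matrix (Fin N) (Fin N) ℝ} (hA : A.IsSymm) {μ : Fin N → ℝ} (hμ : Antitone μ)
    (hroots : A.charpoly.roots = Finset.univ.val.map μ) :
    ∃ v : OrthonormalBasis (Fin N) ℝ (EuclideanSpace ℝ (Fin N)),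
      ∀ j, toEuclideanLin A (v j) = μ j • v j := by
  have hT : (toEuclideanLin A).IsSymmetric :=
    isSymmetric_toEuclideanLin_iff.mpr (isHermitian_iff_isSymm.mpr hA)
  have hn := finrank_euclideanSpace_fin (𝕜 := ℝ) (n := N)
  have : μ = hT.eigenvalues hn := by
    apply List.ofFn_injective
    have hcharpoly : (toEuclideanLin A).charpoly = A.charpoly := by
      rw [toEuclideanLin, toLpLin_eq_toLin, charpoly_toLin]
    rw [← hμ.sort_map_univ_val, ← hT.sort_roots_charpoly_eq_eigenvalues hn, hcharpoly, hroots]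
    simp only [RCLike.re_to_real, Multiset.map_id']
  exact ⟨hT.eigenvectorBasis hn, fun j => by simp [this]⟩

theorem cauchy_interlacing_general
    (n : ℕ)
    (A : Matrix (Fin (n + 1)) (Fin (n + 1)) ℝ) (hA : A.IsSymm)
    (i : Fin (n + 1))
    (A' : Matrix (Fin n) (Fin n) ℝ)
    (hA' : A' = A.submatrix i.succAbove i.succAbove)
    (μ : Fin (n + 1) → ℝ) (hμmono : Antitone μ)
    (hμ : A.charpoly.roots = Multiset.map μ Finset.univ.val)
    (μ' : Fin n → ℝ) (hμ'mono : Antitone μ')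
    (hμ' : A'.charpoly.roots = Multiset.map μ' Finset.univ.val) :
    ∀ k : Fin n, μ k.castSucc ≥ μ' k ∧ μ' k ≥ μ k.succ := by
  subst hA'
  obtain ⟨v, hv⟩ := hA.exists_orthonormalBasis_apply_eq_smul hμmono hμ
  obtain ⟨v', hv'⟩ := (hA.submatrix _).exists_orthonormalBasis_apply_eq_smul hμ'mono hμ'
  have hcomp := A.isCompression_submatrix_succAbove i
  intro k
  have hk := k.isLt
  constructor
  · refine hcomp.le_of_finrank_lt_card_add_card hv hv' (K := Finset.Iic k)
      (I := Finset.Ici k.castSucc) ?_ (fun j hj => hμ'mono (Finset.mem_Iic.mp hj))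
      (fun j hj => hμmono (Finset.mem_Ici.mp hj))
    simp only [finrank_euclideanSpace_fin, Fin.card_Iic, Fin.card_Ici, Fin.val_castSucc]
    omega
  · refine hcomp.le_of_finrank_lt_card_add_card' hv hv' (K := Finset.Ici k)
      (I := Finset.Iic k.succ) ?_ (fun j hj => hμ'mono (Finset.mem_Ici.mp hj))
      (fun j hj => hμmono (Finset.mem_Iic.mp hj))
    simp only [finrank_euclideanSpace_fin, Fin.card_Ici, Fin.card_Iic, Fin.val_succ]
    omega

/-- **Cauchy interlacing theorem.** Let `A` be an `(n+1) × (n+1)` real symmetric matrix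
(with `n + 1 ≥ 2`), and let `A'` be the `n × n` matrix obtained from `A` by deleting its
`i`-th row and `i`-th column. If `μ : Fin (n+1) → ℝ` enumerates the eigenvalues of `A`
in nonincreasing order (with multiplicity, i.e. it enumerates the roots of the
characteristic polynomial) and `μ' : Fin n → ℝ` does the same for `A'`, then
`μ k ≥ μ' k ≥ μ (k+1)` for every `k`. -/
theorem cauchy_interlacing
    (n : ℕ) (hn : 1 ≤ n)
    (A : Matrix (Fin (n + 1)) (Fin (n + 1)) ℝ) (hA : A.IsSymm)
    (i : Fin (n + 1))
    (A' : Matrix (Fin n) (Fin n) ℝ)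
    (hA' : A' = A.submatrix i.succAbove i.succAbove)
    (μ : Fin (n + 1) → ℝ) (hμmono : Antitone μ)
    (hμ : A.charpoly.roots = Multiset.map μ Finset.univ.val)
    (μ' : Fin n → ℝ) (hμ'mono : Antitone μ')
    (hμ' : A'.charpoly.roots = Multiset.map μ' Finset.univ.val) :
    ∀ k : Fin n, μ k.castSucc ≥ μ' k ∧ μ' k ≥ μ k.succ :=
  cauchy_interlacing_general n A hA i A' hA' μ hμmono hμ μ' hμ'mono hμ'
end

section
/- Let A be an n×n real symmetric matrix, V = {1, …, n}, and S ⊆ V a nonempty subset. Then the principal submatrix A(S) is positive definite if and only if there exists α > 0 such that the matrix A + α·D(V∖S) is positive definite. -/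
/-!
Reorder the indices so that `S` comes first; then `A + α • D(V ∖ S)` is the block matrix
`[[A(S), B], [Bᴴ, A(V ∖ S) + α • 1]]`. When `A(S)` is positive definite, the whole block matrix is
positive definite iff its Schur complement `A(V ∖ S) + α • 1 - Bᴴ A(S)⁻¹ B` is, and this holds as
soon as `α` exceeds minus the least eigenvalue of the Hermitian matrix `A(V ∖ S) - Bᴴ A(S)⁻¹ B`.
Conversely, `D(V ∖ S)` vanishes on `S × S`, so `A(S)` is a principal submatrix of the positive
definite matrix `A + α • D(V ∖ S)`.
-/

open Matrix

namespace Matrix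

theorem posDef_submatrix_equiv {m n R : Type*} [Ring R] [PartialOrder R] [StarRing R]
    {M : Matrix n n R} (e : m ≃ n) : (M.submatrix e e).PosDef ↔ M.PosDef :=
  ⟨fun h => by simpa using h.submatrix e.symm.injective, fun h => h.submatrix e.injective⟩

section RCLike

open scoped ComplexOrder

variable {𝕜 : Type*} [RCLike 𝕜]

section Blocks

variable {m n : Type*} [Fintype m] [Fintype n] [DecidableEq m] [DecidableEq n]

open scoped MatrixOrder in
theorem IsHermitian.exists_posDef_add_smul_one {M : Matrix n n 𝕜}
    (hM : M.IsHermitian) : ∃ α : ℝ, 0 < α ∧ (M + α • (1 : Matrix n n 𝕜)).PosDef := by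
  obtain ⟨c, hc⟩ := M.finite_real_spectrum.bddBelow
  have hle : algebraMap ℝ (Matrix n n 𝕜) c ≤ M := algebraMap_le_of_le_spectrum hc hM
  refine ⟨|c| + 1, by positivity, ?_⟩
  have hsplit : M + (|c| + 1) • (1 : Matrix n n 𝕜) =
      (M - algebraMap ℝ (Matrix n n 𝕜) c) + (|c| + c + 1) • 1 := by
    rw [Algebra.algebraMap_eq_smul_one]
    module
  rw [hsplit]
  exact PosDef.posSemidef_add (le_iff.mp hle) (PosDef.one.smul (by linarith [neg_abs_le c]))

theorem PosDef.posDef_fromBlocks₁₁_iff {A : Matrix m m 𝕜} (hA : A.PosDef) [Invertible A]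
    (B : Matrix m n 𝕜) (D : Matrix n n 𝕜) :
    (fromBlocks A B Bᴴ D).PosDef ↔ (D - Bᴴ * A⁻¹ * B).PosDef := by
  have hdet : (fromBlocks A B Bᴴ D).det = A.det * (D - Bᴴ * A⁻¹ * B).det := by
    rw [det_fromBlocks₁₁, invOf_eq_nonsing_inv]
  have hpsd := hA.fromBlocks₁₁ B D
  constructor
  · intro h
    rw [(hpsd.mp h.posSemidef).posDef_iff_det_ne_zero]
    exact right_ne_zero_of_mul (hdet ▸ h.det_pos.ne')
  · intro h
    rw [(hpsd.mpr h.posSemidef).posDef_iff_det_ne_zero, hdet]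
    exact mul_ne_zero hA.det_pos.ne' h.det_pos.ne'

theorem PosDef.exists_posDef_fromBlocks_add_smul_one {A : Matrix m m 𝕜} (hA : A.PosDef)
    (B : Matrix m n 𝕜) {D : Matrix n n 𝕜} (hD : D.IsHermitian) :
    ∃ α : ℝ, 0 < α ∧ (fromBlocks A B Bᴴ (D + α • 1)).PosDef := by
  have := hA.isUnit.invertible
  obtain ⟨α, hα, hschur⟩ :=
    (hD.sub (isHermitian_conjTranspose_mul_mul B hA.isHermitian.inv)).exists_posDef_add_smul_one
  refine ⟨α, hα, (hA.posDef_fromBlocks₁₁_iff B _).mpr ?_⟩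
  rwa [add_sub_right_comm]

end Blocks

section Principal

variable {ι : Type*} [DecidableEq ι] {p : ι → Prop} [DecidablePred p]

theorem IsHermitian.submatrix_sumCompl_add_smul_diagonal {A : Matrix ι ι 𝕜} (hA : A.IsHermitian)
    (α : ℝ) :
    (A + α • diagonal (fun i => if p i then 0 else 1)).submatrix
        (Equiv.sumCompl p) (Equiv.sumCompl p) =
      let M := A.submatrix (Equiv.sumCompl p) (Equiv.sumCompl p)
      Matrix.fromBlocks M.toBlocks₁₁ M.toBlocks₁₂ M.toBlocks₁₂ᴴ (M.toBlocks₂₂ + α • 1) := by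
  ext (i | i) (j | j)
  · simp [toBlocks₁₁, diagonal_apply, i.2]
  · simp [toBlocks₁₂, diagonal_apply, i.2]
  · have hij : (i : ι) ≠ j := fun h => i.2 (h ▸ j.2)
    simp [toBlocks₁₂, hA.apply i.1, hij]
  · simp [toBlocks₂₂, diagonal_apply, one_apply, Subtype.ext_iff, i.2]

theorem submatrix_add_smul_diagonal_subtype (A : Matrix ι ι 𝕜) (α : ℝ) :
    (A + α • diagonal (fun i => if p i then 0 else 1)).submatrix
        (Subtype.val : {i // p i} → ι) (Subtype.val : {i // p i} → ι) =
      A.submatrix Subtype.val Subtype.val := by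
  ext i j
  by_cases hij : (i : ι) = j <;> simp [hij, j.2]

theorem IsHermitian.posDef_submatrix_iff_exists_posDef_add_smul_diagonal [Fintype ι]
    {A : Matrix ι ι 𝕜} (hA : A.IsHermitian) :
    (A.submatrix (Subtype.val : {i // p i} → ι) Subtype.val).PosDef ↔
      ∃ α : ℝ, 0 < α ∧ (A + α • diagonal (fun i => if p i then 0 else 1)).PosDef := by
  constructor
  · intro hS
    have hM := hA.submatrix (Equiv.sumCompl p)
    obtain ⟨α, hα, hblocks⟩ := hS.exists_posDef_fromBlocks_add_smul_one
      (A.submatrix (Equiv.sumCompl p) (Equiv.sumCompl p)).toBlocks₁₂ (hM.submatrix Sum.inr)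
    refine ⟨α, hα, (posDef_submatrix_equiv (Equiv.sumCompl p)).mp ?_⟩
    rwa [hA.submatrix_sumCompl_add_smul_diagonal]
  · rintro ⟨α, -, hpos⟩
    rw [← submatrix_add_smul_diagonal_subtype A α]
    exact hpos.submatrix Subtype.val_injective

end Principal

end RCLike

end Matrix

theorem submatrix_posDef_iff_exists_shift_general
    (n : ℕ) (A : Matrix (Fin n) (Fin n) ℝ) (hA : A.IsSymm)
    (S : Finset (Fin n)) :
    (A.submatrix (Subtype.val : {i // i ∈ S} → Fin n)
        (Subtype.val : {i // i ∈ S} → Fin n)).PosDef ↔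
      ∃ α : ℝ, 0 < α ∧
        (A + α • Matrix.diagonal (fun i => if i ∈ Sᶜ then (1 : ℝ) else 0)).PosDef := by
  have hD : (fun i => if i ∈ Sᶜ then (1 : ℝ) else 0) = fun i => if i ∈ S then 0 else 1 := by
    funext i
    simp [ite_not]
  rw [hD]
  exact (isHermitian_iff_isSymm.mpr hA).posDef_submatrix_iff_exists_posDef_add_smul_diagonal

/-- Let `A` be an `n × n` real symmetric matrix, `V = {1, …, n}`, and `S ⊆ V` nonempty.
Then the principal submatrix `A(S)` is positive definite iff there exists `α > 0` such that
`A + α • D(V \ S)` is positive definite, where `D(R)` is the diagonal 0/1 matrix with ones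
exactly at the indices in `R`. -/
theorem submatrix_posDef_iff_exists_shift
    (n : ℕ) (A : Matrix (Fin n) (Fin n) ℝ) (hA : A.IsSymm)
    (S : Finset (Fin n)) (hS : S.Nonempty) :
    (A.submatrix (Subtype.val : {i // i ∈ S} → Fin n)
        (Subtype.val : {i // i ∈ S} → Fin n)).PosDef ↔
      ∃ α : ℝ, 0 < α ∧
        (A + α • Matrix.diagonal (fun i => if i ∈ Sᶜ then (1 : ℝ) else 0)).PosDef :=
  submatrix_posDef_iff_exists_shift_general n A hA S
end

section
/- Let A be an n×n real symmetric matrix, α ≥ 0, and let γ be the standard Gaussian measure on ℝⁿ. Define the set function Q(S) = ∫_{ℝⁿ} min{ wᵀ(A + α·D(S))w, 0 } dγ(w) for S ⊆ {1, …, n}. Then Q is monotone nondecreasing (S ⊆ T implies Q(S) ≤ Q(T)) and submodular: Q(S) + Q(T) ≥ Q(S ∪ T) + Q(S ∩ T) for all S, T ⊆ {1, …, n}. -/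
open Matrix MeasureTheory ProbabilityTheory

/-!
For fixed `w`, the map `S ↦ wᵀ(A + α D(S))w = wᵀAw + ∑_{i ∈ S} α wᵢ²` is modular and, since
`α ≥ 0`, nondecreasing. Composing it with the concave nondecreasing `t ↦ min t 0` yields a
monotone submodular set function, and both properties survive integration in `w`: every
quadratic form is integrable against the Gaussian measure, its coordinates having second moments.
-/

theorem integrable_dotProduct_mulVec_pi {ι : Type*} [Fintype ι] {μ : ι → Measure ℝ}
    [∀ i, IsProbabilityMeasure (μ i)] (hμ : ∀ i, MemLp id 2 (μ i)) (M : Matrix ι ι ℝ) :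
    Integrable (fun w : ι → ℝ => w ⬝ᵥ M *ᵥ w) (Measure.pi μ) := by
  have hcoord (i : ι) : MemLp (fun w : ι → ℝ => w i) 2 (Measure.pi μ) :=
    (hμ i).comp_measurePreserving (measurePreserving_eval μ i)
  simp only [dotProduct, mulVec, Finset.mul_sum]
  refine integrable_finsetSum _ fun i _ => integrable_finsetSum _ fun j _ => ?_
  simpa [mul_left_comm] using ((hcoord i).integrable_mul (hcoord j)).const_mul (M i j)

theorem dotProduct_add_smul_diagonal_indicator_mulVec {ι : Type*} [Fintype ι] [DecidableEq ι]
    (A : Matrix ι ι ℝ) (α : ℝ) (S : Finset ι) (w : ι → ℝ) :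
    w ⬝ᵥ (A + α • diagonal fun i => if i ∈ S then (1 : ℝ) else 0) *ᵥ w
      = w ⬝ᵥ A *ᵥ w + ∑ i ∈ S, α * w i ^ 2 := by
  rw [add_mulVec, dotProduct_add, smul_mulVec, dotProduct_smul, smul_eq_mul, ← Finset.mul_sum]
  congr 2
  simp [dotProduct, mulVec_diagonal, Finset.sum_ite_mem, sq]

theorem min_add_sub_add_min_le {x y z : ℝ} (hxy : x ≤ y) (hxz : x ≤ z) :
    min (y + z - x) 0 + min x 0 ≤ min y 0 + min z 0 := by
  simp only [min_def]
  split_ifs <;> linarith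

section ConcaveOfModular

variable {ι : Type*} {c : ι → ℝ} (hc : ∀ i, 0 ≤ c i) (a : ℝ)
include hc

theorem min_add_sum_le_of_subset {S T : Finset ι} (hST : S ⊆ T) :
    min (a + ∑ i ∈ S, c i) 0 ≤ min (a + ∑ i ∈ T, c i) 0 := by
  gcongr
  exact fun i _ _ => hc i

theorem min_add_sum_union_add_inter_le [DecidableEq ι] (S T : Finset ι) :
    min (a + ∑ i ∈ S ∪ T, c i) 0 + min (a + ∑ i ∈ S ∩ T, c i) 0
      ≤ min (a + ∑ i ∈ S, c i) 0 + min (a + ∑ i ∈ T, c i) 0 := by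
  have hmod : a + ∑ i ∈ S ∪ T, c i
      = (a + ∑ i ∈ S, c i) + (a + ∑ i ∈ T, c i) - (a + ∑ i ∈ S ∩ T, c i) := by
    linarith [Finset.sum_union_inter (s₁ := S) (s₂ := T) (f := c)]
  rw [hmod]
  exact min_add_sub_add_min_le
    (add_le_add_right (Finset.sum_le_sum_of_subset_of_nonneg Finset.inter_subset_left
      fun i _ _ => hc i) a)
    (add_le_add_right (Finset.sum_le_sum_of_subset_of_nonneg Finset.inter_subset_right
      fun i _ _ => hc i) a)

end ConcaveOfModular

theorem Q_monotone_and_submodular_general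
    (n : ℕ) (A : Matrix (Fin n) (Fin n) ℝ)
    (α : ℝ) (hα : 0 ≤ α)
    (Q : Finset (Fin n) → ℝ)
    (hQ : ∀ S : Finset (Fin n),
      Q S = ∫ w : Fin n → ℝ,
        min (w ⬝ᵥ (A + α • Matrix.diagonal (fun i => if i ∈ S then (1 : ℝ) else 0)) *ᵥ w) 0
          ∂(Measure.pi fun _ : Fin n => gaussianReal 0 1)) :
    (∀ S T : Finset (Fin n), S ⊆ T → Q S ≤ Q T) ∧
      (∀ S T : Finset (Fin n), Q (S ∪ T) + Q (S ∩ T) ≤ Q S + Q T) := by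
  set f : Finset (Fin n) → (Fin n → ℝ) → ℝ :=
    fun S w => min (w ⬝ᵥ A *ᵥ w + ∑ i ∈ S, α * w i ^ 2) 0
  have hQf (S : Finset (Fin n)) : Q S = ∫ w, f S w ∂(Measure.pi fun _ => gaussianReal 0 1) := by
    simp only [hQ, f, dotProduct_add_smul_diagonal_indicator_mulVec]
  have hint (S : Finset (Fin n)) : Integrable (f S) (Measure.pi fun _ => gaussianReal 0 1) := by
    simp only [f, ← dotProduct_add_smul_diagonal_indicator_mulVec]
    exact (integrable_dotProduct_mulVec_pi (fun _ => memLp_id_gaussianReal 2) _).inf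
      (integrable_const 0)
  have hc (w : Fin n → ℝ) (i : Fin n) : 0 ≤ α * w i ^ 2 := by positivity
  refine ⟨fun S T hST => ?_, fun S T => ?_⟩
  · rw [hQf, hQf]
    exact integral_mono (hint S) (hint T) fun w => min_add_sum_le_of_subset (hc w) _ hST
  · simp only [hQf, ← integral_add (hint _) (hint _)]
    exact integral_mono ((hint _).add (hint _)) ((hint _).add (hint _)) fun w =>
      min_add_sum_union_add_inter_le (hc w) _ S T

/-- Let `A` be an `n × n` real symmetric matrix, `α ≥ 0`, and `γ` the standard Gaussian
measure on `ℝⁿ`. Define `Q(S) = ∫ min { wᵀ(A + α D(S))w, 0 } dγ(w)` for `S ⊆ {1, …, n}`.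
Then `Q` is monotone nondecreasing and submodular. -/
theorem Q_monotone_and_submodular
    (n : ℕ) (A : Matrix (Fin n) (Fin n) ℝ) (hA : A.IsSymm)
    (α : ℝ) (hα : 0 ≤ α)
    (Q : Finset (Fin n) → ℝ)
    (hQ : ∀ S : Finset (Fin n),
      Q S = ∫ w : Fin n → ℝ,
        min (w ⬝ᵥ (A + α • Matrix.diagonal (fun i => if i ∈ S then (1 : ℝ) else 0)) *ᵥ w) 0
          ∂(Measure.pi fun _ : Fin n => gaussianReal 0 1)) :
    (∀ S T : Finset (Fin n), S ⊆ T → Q S ≤ Q T) ∧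
      (∀ S T : Finset (Fin n), Q (S ∪ T) + Q (S ∩ T) ≤ Q S + Q T) :=
  Q_monotone_and_submodular_general n A α hα Q hQ
end

section
/- Let L₊ and L₋ be n×n real symmetric matrices, let L = L₊ − L₋, and let S ⊆ {1, …, n} be nonempty. Let ζ > 0 be such that every eigenvalue of L₋(S) is at most ζ (i.e., L₋(S) ⪯ ζI). If L₊(S) is positive definite and trace((L₊(S))⁻¹) < 1/ζ, then L(S) is positive definite. -/
open Matrix

/-- The principal submatrix of `M` formed by the rows and columns indexed by `S`. -/
def principalSubmatrix {n : ℕ} (M : Matrix (Fin n) (Fin n) ℝ) (S : Finset (Fin n)) :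
    Matrix {i // i ∈ S} {i // i ∈ S} ℝ :=
  M.submatrix Subtype.val Subtype.val

/-!
Write `L(S) = (L₊(S) - ζ I) + (ζ I - L₋(S))`. The second summand is positive semidefinite by
hypothesis, so it suffices that every eigenvalue `μ` of `L₊(S)` exceeds `ζ`. This holds because
`trace L₊(S)⁻¹ = ∑ⱼ 1 / μⱼ` is a sum of positive terms, so `1 / μ < 1 / ζ`.
-/

open Unitary
open scoped ComplexOrder

namespace Matrix

section RCLike

variable {n 𝕜 : Type*} [Fintype n] [DecidableEq n] [RCLike 𝕜] {A : Matrix n n 𝕜}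

namespace IsHermitian

lemma trace_cfc (hA : A.IsHermitian) (f : ℝ → ℝ) :
    (cfc f A).trace = ∑ i, (f (hA.eigenvalues i) : 𝕜) := by
  rw [hA.cfc_eq, IsHermitian.cfc, conjStarAlgAut_apply, trace_mul_cycle, coe_star_mul_self,
    one_mul, trace_diagonal]
  rfl

lemma posDef_cfc_iff (hA : A.IsHermitian) (f : ℝ → ℝ) :
    (cfc f A).PosDef ↔ ∀ i, 0 < f (hA.eigenvalues i) := by
  rw [hA.cfc_eq, IsHermitian.cfc, conjStarAlgAut_apply,
    Unitary.isUnit_coe.posDef_star_right_conjugate_iff, posDef_diagonal_iff]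
  simp

lemma posDef_sub_smul_one_iff (hA : A.IsHermitian) (c : ℝ) :
    (A - c • (1 : Matrix n n 𝕜)).PosDef ↔ ∀ i, c < hA.eigenvalues i := by
  have hcfc : A - c • (1 : Matrix n n 𝕜) = cfc (fun x ↦ x - c) A := by
    rw [cfc_sub (fun x ↦ x) (fun _ ↦ c) A, cfc_id' ℝ A, cfc_const c A,
      Algebra.algebraMap_eq_smul_one]
  simp [hcfc, hA.posDef_cfc_iff]

end IsHermitian

lemma PosDef.trace_inv (hA : A.PosDef) :
    A⁻¹.trace = ∑ i, (((hA.1.eigenvalues i)⁻¹ : ℝ) : 𝕜) := by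
  rw [nonsing_inv_eq_ringInverse,
    ← cfc_ringInverse_id (R := ℝ) A hA.isUnit hA.1.isSelfAdjoint, hA.1.trace_cfc]

end RCLike

namespace PosDef

variable {n : Type*} [Fintype n] [DecidableEq n] {A : Matrix n n ℝ}

lemma lt_eigenvalues_of_trace_inv_lt (hA : A.PosDef) {ζ : ℝ} (htr : A⁻¹.trace < ζ⁻¹) (i : n) :
    ζ < hA.1.eigenvalues i := by
  have hμ := hA.eigenvalues_pos
  have hle : (hA.1.eigenvalues i)⁻¹ ≤ A⁻¹.trace := by
    rw [hA.trace_inv]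
    exact Finset.single_le_sum (fun j _ ↦ (inv_pos.mpr (hμ j)).le) (Finset.mem_univ i)
  have hζ : 0 < ζ := inv_pos.mp ((inv_pos.mpr (hμ i)).trans_le hle |>.trans htr)
  exact (inv_lt_inv₀ (hμ i) hζ).mp (hle.trans_lt htr)

lemma sub_smul_one_of_trace_inv_lt (hA : A.PosDef) {ζ : ℝ} (htr : A⁻¹.trace < ζ⁻¹) :
    (A - ζ • (1 : Matrix n n ℝ)).PosDef :=
  (hA.1.posDef_sub_smul_one_iff ζ).mpr (hA.lt_eigenvalues_of_trace_inv_lt htr)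

end PosDef

end Matrix

theorem posDef_of_inv_trace_lt_general
    (n : ℕ) (Lp Lm : Matrix (Fin n) (Fin n) ℝ)
    (L : Matrix (Fin n) (Fin n) ℝ) (hL : L = Lp - Lm)
    (S : Finset (Fin n))
    (ζ : ℝ)
    (hLmS : (ζ • (1 : Matrix {i // i ∈ S} {i // i ∈ S} ℝ) -
        principalSubmatrix Lm S).PosSemidef)
    (hLpS : (principalSubmatrix Lp S).PosDef)
    (htr : Matrix.trace (principalSubmatrix Lp S)⁻¹ < 1 / ζ) :
    (principalSubmatrix L S).PosDef := by
  have hsplit : principalSubmatrix L S =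
      (principalSubmatrix Lp S - ζ • 1) + (ζ • 1 - principalSubmatrix Lm S) := by
    rw [sub_add_sub_cancel, hL]
    rfl
  rw [one_div] at htr
  rw [hsplit]
  exact (hLpS.sub_smul_one_of_trace_inv_lt htr).add_posSemidef hLmS

/-- Let `L₊`, `L₋` be `n × n` real symmetric matrices, `L = L₊ - L₋`, and `S` a nonempty
index set. Let `ζ > 0` be such that `L₋(S) ⪯ ζ I`. If `L₊(S)` is positive definite and
`trace((L₊(S))⁻¹) < 1/ζ`, then `L(S)` is positive definite. -/
theorem posDef_of_inv_trace_lt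
    (n : ℕ) (Lp Lm : Matrix (Fin n) (Fin n) ℝ)
    (hLp : Lp.IsSymm) (hLm : Lm.IsSymm)
    (L : Matrix (Fin n) (Fin n) ℝ) (hL : L = Lp - Lm)
    (S : Finset (Fin n)) (hS : S.Nonempty)
    (ζ : ℝ) (hζ : 0 < ζ)
    (hLmS : (ζ • (1 : Matrix {i // i ∈ S} {i // i ∈ S} ℝ) -
        principalSubmatrix Lm S).PosSemidef)
    (hLpS : (principalSubmatrix Lp S).PosDef)
    (htr : Matrix.trace (principalSubmatrix Lp S)⁻¹ < 1 / ζ) :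
    (principalSubmatrix L S).PosDef :=
  posDef_of_inv_trace_lt_general n Lp Lm L hL S ζ hLmS hLpS htr
end

section
/- Let A be an n×n real symmetric positive definite matrix whose off-diagonal entries are all nonpositive (i.e., A is a symmetric positive definite M-matrix). Then the set function S ↦ trace((A(S))⁻¹) is supermodular on subsets of {1, …, n}: for all S, T ⊆ {1, …, n}, trace((A(S))⁻¹) + trace((A(T))⁻¹) ≤ trace((A(S ∪ T))⁻¹) + trace((A(S ∩ T))⁻¹), where by convention the trace of the inverse of the empty submatrix is 0. -/
open Matrix

/-!
Choose `d > tr A` and write `A = d • 1 - N`; the sign condition on `A` makes `N` entrywise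
nonnegative. For every `S` the Neumann series gives
`tr (A(S))⁻¹ = ∑ₖ tr (N(S) ^ k) / d ^ (k + 1)`, so it suffices that each `S ↦ tr (N(S) ^ k)` is
supermodular. For `k ≥ 1` this trace is the trace of the `k`-th power of `N` with the rows and
columns outside `S` replaced by zero, and the entries of that power are, by induction on `k`,
nonnegative, monotone and supermodular in `S`: a product of nonnegative monotone supermodular
functions is again supermodular.
-/

open Finset

def IsSupermodular {α β : Type*} [Lattice α] [Add β] [LE β] (f : α → β) : Prop :=
  ∀ a b, f a + f b ≤ f (a ⊔ b) + f (a ⊓ b)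

namespace IsSupermodular

variable {α β : Type*} [Lattice α]

lemma sum {ι : Type*} [AddCommMonoid β] [PartialOrder β] [IsOrderedAddMonoid β]
    (s : Finset ι) {f : ι → α → β} (hf : ∀ i ∈ s, IsSupermodular (f i)) :
    IsSupermodular fun a => ∑ i ∈ s, f i a := fun a b => by
  simp only [← sum_add_distrib]
  exact sum_le_sum fun i hi => hf i hi a b

lemma mul [CommRing β] [LinearOrder β] [IsStrictOrderedRing β] {f g : α → β}
    (hf : IsSupermodular f) (hg : IsSupermodular g) (hf₀ : ∀ a, 0 ≤ f a) (hg₀ : ∀ a, 0 ≤ g a)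
    (hf_mono : Monotone f) (hg_mono : Monotone g) : IsSupermodular fun a => f a * g a := by
  intro a b
  have hfa := hf_mono (inf_le_left : a ⊓ b ≤ a)
  have hfb := hf_mono (inf_le_right : a ⊓ b ≤ b)
  have hga := hg_mono (inf_le_left : a ⊓ b ≤ a)
  have hgb := hg_mono (inf_le_right : a ⊓ b ≤ b)
  have hf_ab := hf a b
  have hg_ab := hg a b
  have hf_inf := hf₀ (a ⊓ b)
  have hg_inf := hg₀ (a ⊓ b)
  -- With `m = a ⊓ b`, the sum `f a * g a + f b * g b` plus the nonnegative slack
  -- `(f a - f m) * (g b - g m) + (f b - f m) * (g a - g m)` is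
  -- `(f a + f b - f m) * (g a + g b - g m) + f m * g m`, and both nonnegative factors there are
  -- bounded by their values at `a ⊔ b`.
  nlinarith [mul_nonneg (sub_nonneg.2 hfa) (sub_nonneg.2 hgb),
    mul_nonneg (sub_nonneg.2 hfb) (sub_nonneg.2 hga),
    mul_nonneg (by linarith : 0 ≤ f (a ⊔ b) - (f a + f b - f (a ⊓ b))) (hg₀ (a ⊔ b)),
    mul_nonneg (by linarith : 0 ≤ f a + f b - f (a ⊓ b))
      (by linarith : 0 ≤ g (a ⊔ b) + g (a ⊓ b) - (g a + g b))]

lemma div_const [Field β] [LinearOrder β] [IsStrictOrderedRing β] {f : α → β}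
    (hf : IsSupermodular f) {c : β} (hc : 0 ≤ c) : IsSupermodular fun a => f a / c :=
  fun a b => by simpa only [add_div] using div_le_div_of_nonneg_right (hf a b) hc

lemma of_hasSum {ι : Type*} [AddCommMonoid β] [PartialOrder β] [IsOrderedAddMonoid β]
    [TopologicalSpace β] [OrderClosedTopology β] [ContinuousAdd β]
    {f : ι → α → β} {F : α → β} (hf : ∀ i, IsSupermodular (f i))
    (hF : ∀ a, HasSum (fun i => f i a) (F a)) : IsSupermodular F := fun a b =>
  hasSum_le (fun i => hf i a b) ((hF a).add (hF b)) ((hF _).add (hF _))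

end IsSupermodular

lemma hasSum_sub_pow_div_pow_succ {d e : ℝ} (he : 0 < e) (hed : e < 2 * d) :
    HasSum (fun k : ℕ => (d - e) ^ k / d ^ (k + 1)) e⁻¹ := by
  have hd : 0 < d := by linarith
  have hr : |(d - e) / d| < 1 := by
    rw [abs_div, abs_of_pos hd, div_lt_one hd, abs_lt]; constructor <;> linarith
  have hterm : (fun k : ℕ => (d - e) ^ k / d ^ (k + 1)) = fun k => ((d - e) / d) ^ k / d := by
    ext k; rw [div_pow, pow_succ, div_div]
  have hsum : (1 - (d - e) / d)⁻¹ / d = e⁻¹ := by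
    rw [one_sub_div hd.ne', sub_sub_cancel, inv_div, div_div_cancel_left' hd.ne']
  rw [hterm, ← hsum]
  exact (hasSum_geometric_of_abs_lt_one hr).div_const d

namespace Matrix

variable {ι R : Type*}

lemma PosSemidef.trace_submatrix_le [Fintype ι] [Ring R] [PartialOrder R] [StarRing R]
    [IsOrderedAddMonoid R] {A : Matrix ι ι R} (hA : A.PosSemidef) (S : Finset ι) :
    (A.submatrix ((↑) : S → ι) (↑)).trace ≤ A.trace :=
  (sum_coe_sort S fun i => A i i).le.trans
    (sum_le_sum_of_subset_of_nonneg (subset_univ S) fun _ _ _ => hA.diag_nonneg)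

variable [DecidableEq ι]

lemma smul_one_sub_apply_nonneg [Ring R] [PartialOrder R] [IsOrderedRing R] {A : Matrix ι ι R}
    (hoff : ∀ i j, i ≠ j → A i j ≤ 0) {d : R} (hd : ∀ i, A i i ≤ d) (i j : ι) :
    0 ≤ (d • 1 - A) i j := by
  rcases eq_or_ne i j with rfl | hij
  · simpa using hd i
  · simpa [hij] using hoff i j hij

section Spectral

variable [Fintype ι]

lemma IsHermitian.trace_cfc_s10 {𝕜 : Type*} [RCLike 𝕜] {B : Matrix ι ι 𝕜}
    (hB : B.IsHermitian) (f : ℝ → ℝ) : (cfc f B).trace = ∑ i, (f (hB.eigenvalues i) : 𝕜) := by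
  rw [hB.cfc_eq, IsHermitian.cfc, Unitary.conjStarAlgAut_apply, trace_mul_cycle,
    Unitary.coe_star_mul_self, one_mul, trace_diagonal]
  rfl

lemma PosDef.hasSum_trace_inv {B : Matrix ι ι ℝ} (hB : B.PosDef) {d : ℝ}
    (hd : B.trace < 2 * d) :
    HasSum (fun k : ℕ => ((d • 1 - B) ^ k).trace / d ^ (k + 1)) B⁻¹.trace := by
  have hB_sa : IsSelfAdjoint B := hB.isHermitian
  have hpow (k : ℕ) : (d • 1 - B) ^ k = cfc (fun x => (d - x) ^ k) B := by
    rw [cfc_pow _ _ B, cfc_sub _ _ B, cfc_const d B, cfc_id' ℝ B, Algebra.algebraMap_eq_smul_one]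
  have hinv : B⁻¹ = cfc (fun x : ℝ => x⁻¹) B := by
    rw [nonsing_inv_eq_ringInverse, cfc_ringInverse_id _ hB.isUnit]
  simp only [hpow, hinv, hB.isHermitian.trace_cfc_s10, RCLike.ofReal_real_eq_id, id, sum_div]
  refine hasSum_sum fun i _ => hasSum_sub_pow_div_pow_succ (hB.eigenvalues_pos i) ?_
  calc hB.isHermitian.eigenvalues i
      ≤ ∑ j, hB.isHermitian.eigenvalues j :=
        single_le_sum (fun j _ => (hB.eigenvalues_pos j).le) (mem_univ i)
    _ = B.trace := by simp [hB.isHermitian.trace_eq_sum_eigenvalues]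
    _ < 2 * d := hd

end Spectral

def principalMask [Zero R] (N : Matrix ι ι R) (S : Finset ι) : Matrix ι ι R :=
  of fun i j => if i ∈ S ∧ j ∈ S then N i j else 0

lemma trace_principalMask_pow [Fintype ι] [CommSemiring R] (N : Matrix ι ι R) (S : Finset ι)
    (k : ℕ) :
    (N.principalMask S ^ (k + 1)).trace = (N.submatrix ((↑) : S → ι) (↑) ^ (k + 1)).trace := by
  let e := Equiv.sumCompl (· ∈ S)
  have hblocks : reindexAlgEquiv R R e.symm (N.principalMask S) =
      fromBlocks (N.submatrix ((↑) : S → ι) (↑)) 0 0 0 := by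
    ext (i | i) (j | j) <;> simp [principalMask, e, i.2, j.2]
  calc (N.principalMask S ^ (k + 1)).trace
      = (reindexAlgEquiv R R e.symm (N.principalMask S ^ (k + 1))).trace :=
        (e.sum_comp fun i => (N.principalMask S ^ (k + 1)) i i).symm
    _ = (fromBlocks (N.submatrix ((↑) : S → ι) (↑) ^ (k + 1)) 0 0 (0 ^ (k + 1))).trace := by
        rw [map_pow, hblocks, fromBlocks_diagonal_pow]
    _ = _ := by simp [trace, Fintype.sum_sum_type]

section OrderedSemiring

variable [CommSemiring R] [PartialOrder R] {N : Matrix ι ι R} (hN : ∀ i j, 0 ≤ N i j)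
include hN

lemma principalMask_apply_nonneg (S : Finset ι) (i j : ι) : 0 ≤ N.principalMask S i j := by
  simp only [principalMask, of_apply]
  split_ifs
  exacts [hN i j, le_rfl]

lemma monotone_principalMask_apply (i j : ι) : Monotone fun S => N.principalMask S i j := by
  intro S T hST
  simp only [principalMask, of_apply]
  split_ifs with hS hT <;> first | rfl | exact hN i j | exact absurd ⟨hST hS.1, hST hS.2⟩ hT

variable [IsOrderedRing R] [Fintype ι]

lemma principalMask_pow_apply_nonneg (k : ℕ) (S : Finset ι) (i j : ι) :
    0 ≤ (N.principalMask S ^ k) i j := by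
  induction k generalizing i j with
  | zero => rw [pow_zero, one_apply]; split_ifs <;> simp
  | succ k ih =>
    rw [pow_succ, mul_apply]
    exact sum_nonneg fun l _ => mul_nonneg (ih i l) (principalMask_apply_nonneg hN S l j)

lemma monotone_principalMask_pow_apply (k : ℕ) (i j : ι) :
    Monotone fun S => (N.principalMask S ^ k) i j := by
  induction k generalizing i j with
  | zero => exact monotone_const
  | succ k ih =>
    intro S T hST
    simp only [pow_succ, mul_apply]
    exact sum_le_sum fun l _ => mul_le_mul (ih i l hST) (monotone_principalMask_apply hN l j hST)
      (principalMask_apply_nonneg hN S l j) (principalMask_pow_apply_nonneg hN k T i l)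

end OrderedSemiring

section OrderedRing

variable [CommRing R] [LinearOrder R] [IsStrictOrderedRing R] {N : Matrix ι ι R}
  (hN : ∀ i j, 0 ≤ N i j)
include hN

lemma isSupermodular_principalMask_apply (i j : ι) :
    IsSupermodular fun S => N.principalMask S i j := by
  intro S T
  simp only [principalMask, of_apply, sup_eq_union, inf_eq_inter, mem_union, mem_inter]
  split_ifs <;> first | linarith [hN i j] | tauto

variable [Fintype ι]

lemma isSupermodular_principalMask_pow_apply (k : ℕ) (i j : ι) :
    IsSupermodular fun S => (N.principalMask S ^ k) i j := by
  induction k generalizing i j with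
  | zero => intro S T; simp
  | succ k ih =>
    simp only [pow_succ, mul_apply]
    exact IsSupermodular.sum _ fun l _ => (ih i l).mul (isSupermodular_principalMask_apply hN l j)
      (principalMask_pow_apply_nonneg hN k · i l) (principalMask_apply_nonneg hN · l j)
      (monotone_principalMask_pow_apply hN k i l) (monotone_principalMask_apply hN l j)

lemma isSupermodular_trace_submatrix_pow (k : ℕ) :
    IsSupermodular fun S : Finset ι => (N.submatrix ((↑) : S → ι) (↑) ^ k).trace := by
  cases k with
  | zero =>
    intro S T
    simp only [pow_zero, trace_one, Fintype.card_coe, sup_eq_union, inf_eq_inter]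
    exact_mod_cast (card_union_add_card_inter S T).ge
  | succ k =>
    simp only [← trace_principalMask_pow N _ k]
    unfold trace
    exact IsSupermodular.sum _ fun i _ => isSupermodular_principalMask_pow_apply hN _ i i

end OrderedRing

end Matrix

/-- Let `A` be an `n × n` real symmetric positive definite matrix with nonpositive
off-diagonal entries (a symmetric positive definite M-matrix). Then
`S ↦ trace((A(S))⁻¹)` is supermodular: for all `S, T ⊆ {1, …, n}`,
`trace((A(S))⁻¹) + trace((A(T))⁻¹) ≤ trace((A(S ∪ T))⁻¹) + trace((A(S ∩ T))⁻¹)`. -/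
theorem trace_inv_supermodular
    (n : ℕ) (A : Matrix (Fin n) (Fin n) ℝ)
    (hA : A.PosDef)
    (hoff : ∀ i j : Fin n, i ≠ j → A i j ≤ 0)
    (S T : Finset (Fin n)) :
    Matrix.trace (principalSubmatrix A S)⁻¹ + Matrix.trace (principalSubmatrix A T)⁻¹ ≤
      Matrix.trace (principalSubmatrix A (S ∪ T))⁻¹ +
        Matrix.trace (principalSubmatrix A (S ∩ T))⁻¹ := by
  set d : ℝ := A.trace + 1
  have htrace_nonneg : 0 ≤ A.trace := hA.posSemidef.trace_nonneg
  set N : Matrix (Fin n) (Fin n) ℝ := d • 1 - A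
  have hN : ∀ i j, 0 ≤ N i j := smul_one_sub_apply_nonneg hoff fun i => by
    have : A i i ≤ A.trace :=
      single_le_sum (f := fun j => A j j) (fun j _ => hA.posSemidef.diag_nonneg) (mem_univ i)
    linarith
  have hseries (X : Finset (Fin n)) : HasSum
      (fun k => (principalSubmatrix N X ^ k).trace / d ^ (k + 1))
      (principalSubmatrix A X)⁻¹.trace := by
    have hNX : principalSubmatrix N X = d • 1 - principalSubmatrix A X := by
      simp only [principalSubmatrix, N, submatrix_sub, submatrix_smul, Pi.sub_apply,
        Pi.smul_apply, submatrix_one _ Subtype.val_injective]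
    rw [hNX]
    refine (hA.submatrix Subtype.val_injective).hasSum_trace_inv ?_
    linarith [hA.posSemidef.trace_submatrix_le X]
  exact IsSupermodular.of_hasSum (fun k => (isSupermodular_trace_submatrix_pow hN k).div_const
    (pow_nonneg (by positivity) _)) hseries S T
end

section
/- Let A be an n×n real symmetric positive definite matrix with n ≥ 2. Then the smallest eigenvalue of A satisfies λ_min(A) ≥ ((n−1)/trace(A))^{n−1} · det(A). -/
/-!
The bound holds for every eigenvalue `λ_j`, not only the smallest: `det A = λ_j · ∏_{i ≠ j} λ_i`,
and by AM-GM
`∏_{i ≠ j} λ_i ≤ ((∑_{i ≠ j} λ_i) / (n - 1)) ^ (n - 1) ≤ (trace A / (n - 1)) ^ (n - 1)`,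
since the eigenvalues are nonnegative and sum to the trace.
-/

open Matrix Finset

theorem Real.prod_le_sum_div_card_pow {ι : Type*} (s : Finset ι) (f : ι → ℝ)
    (hf : ∀ i ∈ s, 0 ≤ f i) : ∏ i ∈ s, f i ≤ ((∑ i ∈ s, f i) / #s) ^ #s := by
  rcases s.eq_empty_or_nonempty with rfl | hs
  · simp
  have amgm := Real.geom_mean_le_arith_mean s (fun _ ↦ 1) f (by simp) (by simpa using hs) hf
  simp only [Real.rpow_one, one_mul, sum_const, nsmul_eq_mul, mul_one] at amgm
  calc ∏ i ∈ s, f i = ((∏ i ∈ s, f i) ^ (#s : ℝ)⁻¹) ^ #s :=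
        (Real.rpow_inv_natCast_pow (prod_nonneg hf) hs.card_pos.ne').symm
    _ ≤ ((∑ i ∈ s, f i) / #s) ^ #s :=
        pow_le_pow_left₀ (Real.rpow_nonneg (prod_nonneg hf) _) amgm _

theorem Finset.card_sub_one_div_sum_pow_mul_prod_le {ι : Type*} [DecidableEq ι] (s : Finset ι)
    (f : ι → ℝ) (hf : ∀ i ∈ s, 0 ≤ f i) {j : ι} (hj : j ∈ s) :
    (((#s - 1 : ℕ) : ℝ) / ∑ i ∈ s, f i) ^ (#s - 1) * ∏ i ∈ s, f i ≤ f j := by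
  set k := #s - 1
  set S := ∑ i ∈ s, f i
  have hS : 0 ≤ S := sum_nonneg hf
  have hrest : ∏ i ∈ s.erase j, f i ≤ (S / k) ^ k :=
    calc ∏ i ∈ s.erase j, f i ≤ ((∑ i ∈ s.erase j, f i) / k) ^ k := by
          rw [show k = #(s.erase j) from (card_erase_of_mem hj).symm]
          exact Real.prod_le_sum_div_card_pow _ f fun i hi ↦ hf i (mem_of_mem_erase hi)
      _ ≤ (S / k) ^ k := by
          have hpart : 0 ≤ ∑ i ∈ s.erase j, f i :=
            sum_nonneg fun i hi ↦ hf i (mem_of_mem_erase hi)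
          gcongr
          exact sum_le_sum_of_subset_of_nonneg (erase_subset j s) fun i hi _ ↦ hf i hi
  -- `x / x ≤ 1` also at `x = 0`, so neither `k = 0` nor `S = 0` needs a separate case.
  have hcancel : (k / S) ^ k * (S / k) ^ k ≤ 1 := by
    rw [← mul_pow, div_mul_div_comm, mul_comm S]
    exact pow_le_one₀ (by positivity) (div_self_le_one _)
  calc (k / S) ^ k * ∏ i ∈ s, f i = f j * ((k / S) ^ k * ∏ i ∈ s.erase j, f i) := by
        rw [← mul_prod_erase s f hj]; ring
    _ ≤ f j * ((k / S) ^ k * (S / k) ^ k) := by gcongr; exact hf j hj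
    _ ≤ f j := mul_le_of_le_one_right (hf j hj) hcancel

theorem Matrix.PosSemidef.card_sub_one_div_trace_pow_mul_det_le_eigenvalues {ι : Type*}
    [Fintype ι] [DecidableEq ι] {A : Matrix ι ι ℝ} (hA : A.PosSemidef) (i : ι) :
    (((Fintype.card ι - 1 : ℕ) : ℝ) / A.trace) ^ (Fintype.card ι - 1) * A.det
      ≤ hA.1.eigenvalues i := by
  have htrace : A.trace = ∑ j, hA.1.eigenvalues j := by simpa using hA.1.trace_eq_sum_eigenvalues
  have hdet : A.det = ∏ j, hA.1.eigenvalues j := by simpa using hA.1.det_eq_prod_eigenvalues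
  rw [htrace, hdet, ← card_univ]
  exact card_sub_one_div_sum_pow_mul_prod_le _ _ (fun j _ ↦ hA.eigenvalues_nonneg j) (mem_univ i)

/-- Lower bound on the smallest eigenvalue: if `A` is an `n × n` real symmetric positive
definite matrix with `n ≥ 2`, then
`λ_min(A) ≥ ((n-1)/trace(A))^(n-1) · det(A)`. -/
theorem lambda_min_ge_det_bound
    (n : ℕ) (hn : 2 ≤ n)
    (A : Matrix (Fin n) (Fin n) ℝ) (hA : A.PosDef) :
    (((n - 1 : ℕ) : ℝ) / A.trace) ^ (n - 1) * A.det ≤ ⨅ i, hA.1.eigenvalues i := by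
  have : Nonempty (Fin n) := ⟨⟨0, by omega⟩⟩
  refine le_ciInf fun i ↦ ?_
  simpa using hA.posSemidef.card_sub_one_div_trace_pow_mul_det_le_eigenvalues i
end

section
/- Let L be an n×n real symmetric positive semidefinite matrix, and let α > 0 and ζ > 0. Then the set function f₂(S) = log det( L + α·D(S) + ζI ) is monotone nondecreasing and submodular on subsets of {1, …, n}. -/
/-!
Write `M(S) = A + D_d(S)` with `A = L + ζI` positive definite and `D_d(S)` the diagonal matrix
carrying the weights `d ≥ 0` on `S`. Adding `i ∉ S` is a rank-one update, so by the matrix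
determinant lemma the marginal gain of `log det M` is `log (1 + d i * M(S)⁻¹ i i) ≥ 0`.
Since `S ↦ M(S)` is monotone in the Loewner order and inversion is Loewner-antitone, the
diagonal entry `M(S)⁻¹ i i` decreases in `S`: the gains diminish, which is submodularity.
-/

open Matrix Real Finset

namespace Matrix

variable {ι : Type*} [Fintype ι] [DecidableEq ι]

theorem det_add_single_self {R : Type*} [CommRing R] {A : Matrix ι ι R} (hA : IsUnit A.det)
    (i : ι) (c : R) : (A + single i i c).det = A.det * (1 + c * A⁻¹ i i) := by
  have h : single i i c =
      replicateCol Unit (Pi.single i c) * replicateRow Unit (Pi.single i (1 : R)) := by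
    rw [← vecMulVec_eq]
    ext a b
    simp only [single_apply, vecMulVec_apply, Pi.single_apply]
    grind
  rw [h, det_add_replicateCol_mul_replicateRow hA, det_unique (n := Unit)]
  simp [mul_apply, Pi.single_apply, mul_comm]

open scoped ComplexOrder in
theorem PosDef.posSemidef_inv_sub_inv_add {𝕜 : Type*} [RCLike 𝕜] {A P : Matrix ι ι 𝕜}
    (hA : A.PosDef) (hP : P.PosSemidef) : (A⁻¹ - (A + P)⁻¹).PosSemidef := by
  set B := A + P with hB_def
  have hB : B.PosDef := hA.add_posSemidef hP
  have hAdet : IsUnit A.det := hA.isUnit.map detMonoidHom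
  have hBdet : IsUnit B.det := hB.isUnit.map detMonoidHom
  have hexpand : B * A⁻¹ * B = B + (P + P * A⁻¹ * P) := by
    simp only [hB_def, add_mul, mul_add, Matrix.mul_assoc, mul_nonsing_inv _ hAdet,
      nonsing_inv_mul _ hAdet, Matrix.mul_one, Matrix.one_mul]
  have hcongr : A⁻¹ - B⁻¹ = B⁻¹ * (P + P * A⁻¹ * P) * B⁻¹ := by
    calc A⁻¹ - B⁻¹ = B⁻¹ * (B * A⁻¹ * B) * B⁻¹ - B⁻¹ * B * B⁻¹ := by
          simp only [Matrix.mul_assoc, mul_nonsing_inv _ hBdet, Matrix.mul_one]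
          simp only [← Matrix.mul_assoc, nonsing_inv_mul _ hBdet, Matrix.one_mul]
      _ = B⁻¹ * (P + P * A⁻¹ * P) * B⁻¹ := by
          rw [hexpand, Matrix.mul_add, Matrix.add_mul, add_sub_cancel_left]
  have hmiddle : (P + P * A⁻¹ * P).PosSemidef := by
    have h := hA.inv.posSemidef.conjTranspose_mul_mul_same P
    rw [hP.1] at h
    exact hP.add h
  have h := hmiddle.mul_mul_conjTranspose_same B⁻¹
  rwa [conjTranspose_nonsing_inv, hB.1, ← hcongr] at h

end Matrix

namespace Finset

variable {α β : Type*} [DecidableEq α] [AddCommGroup β] [PartialOrder β]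
  [IsOrderedAddMonoid β] {f : Finset α → β}

theorem sub_le_sub_union_of_insert_sub_antitone
    (hf : ∀ X Y, X ⊆ Y → ∀ i ∉ Y, f (insert i Y) - f Y ≤ f (insert i X) - f X)
    {A B : Finset α} (hAB : A ⊆ B) (U : Finset α) (hUB : Disjoint U B) :
    f (B ∪ U) - f B ≤ f (A ∪ U) - f A := by
  induction U using Finset.induction_on with
  | empty => simp
  | @insert i U hiU ih =>
    rw [disjoint_insert_left] at hUB
    have hiBU : i ∉ B ∪ U := by simp [hUB.1, hiU]
    have step := hf (A ∪ U) (B ∪ U) (union_subset_union hAB subset_rfl) i hiBU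
    rw [union_insert, union_insert]
    calc f (insert i (B ∪ U)) - f B
        = (f (insert i (B ∪ U)) - f (B ∪ U)) + (f (B ∪ U) - f B) := by abel
      _ ≤ (f (insert i (A ∪ U)) - f (A ∪ U)) + (f (A ∪ U) - f A) :=
          add_le_add step (ih hUB.2)
      _ = f (insert i (A ∪ U)) - f A := by abel

theorem union_add_inter_le_of_insert_sub_antitone
    (hf : ∀ X Y, X ⊆ Y → ∀ i ∉ Y, f (insert i Y) - f Y ≤ f (insert i X) - f X)
    (S T : Finset α) : f (S ∪ T) + f (S ∩ T) ≤ f S + f T := by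
  have h := sub_le_sub_union_of_insert_sub_antitone hf (inter_subset_right (s₁ := S)) (S \ T)
    sdiff_disjoint
  rw [union_sdiff_self_eq_union, union_comm (S ∩ T), sdiff_union_inter, union_comm T S] at h
  rwa [sub_le_sub_iff] at h

end Finset

section LogDetAddDiagonal

variable {ι : Type*} [DecidableEq ι] {A : Matrix ι ι ℝ} {d : ι → ℝ}

local notation "M[" S "]" => A + diagonal (Finset.piecewise S d 0)

theorem diagonal_piecewise_insert (S : Finset ι) {i : ι} (hi : i ∉ S) :
    diagonal ((insert i S).piecewise d 0) = diagonal (S.piecewise d 0) + single i i (d i) := by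
  ext a b
  simp only [diagonal_apply, Matrix.add_apply, single_apply, piecewise, mem_insert, Pi.zero_apply]
  grind

theorem diagonal_piecewise_of_subset {S T : Finset ι} (hST : S ⊆ T) :
    diagonal (T.piecewise d 0) = diagonal (S.piecewise d 0) + diagonal ((T \ S).piecewise d 0) := by
  rw [diagonal_add]
  congr 1
  ext i
  simp only [piecewise, mem_sdiff, Pi.zero_apply]
  grind

theorem posDef_add_diagonal_piecewise (hA : A.PosDef) (hd : 0 ≤ d) (S : Finset ι) :
    M[S].PosDef :=
  hA.add_posSemidef (PosSemidef.diagonal (S.piecewise_mem_Icc' hd).1)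

theorem log_det_add_diagonal_piecewise_insert [Fintype ι] (hA : A.PosDef) (hd : 0 ≤ d)
    {S : Finset ι} {i : ι} (hi : i ∉ S) :
    log M[insert i S].det = log M[S].det + log (1 + d i * M[S]⁻¹ i i) := by
  have hpos := posDef_add_diagonal_piecewise hA hd S
  have hgain : 0 < 1 + d i * M[S]⁻¹ i i :=
    add_pos_of_pos_of_nonneg one_pos (mul_nonneg (hd i) hpos.inv.diag_pos.le)
  rw [diagonal_piecewise_insert S hi, ← add_assoc,
    det_add_single_self (hpos.isUnit.map detMonoidHom), log_mul hpos.det_pos.ne' hgain.ne']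

theorem inv_add_diagonal_piecewise_apply_self_antitone [Fintype ι] (hA : A.PosDef) (hd : 0 ≤ d)
    {S T : Finset ι} (hST : S ⊆ T) (i : ι) : M[T]⁻¹ i i ≤ M[S]⁻¹ i i := by
  rw [diagonal_piecewise_of_subset hST, ← add_assoc]
  have := ((posDef_add_diagonal_piecewise hA hd S).posSemidef_inv_sub_inv_add
    (PosSemidef.diagonal ((T \ S).piecewise_mem_Icc' hd).1)).diag_nonneg (i := i)
  rwa [Matrix.sub_apply, sub_nonneg] at this

theorem monotone_log_det_add_diagonal_piecewise [Fintype ι] (hA : A.PosDef) (hd : 0 ≤ d) :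
    Monotone fun S : Finset ι => log M[S].det := by
  refine monotone_iff_forall_le_insert.mpr fun S i hi => ?_
  rw [log_det_add_diagonal_piecewise_insert hA hd hi, le_add_iff_nonneg_right]
  exact log_nonneg (le_add_of_nonneg_right
    (mul_nonneg (hd i) (posDef_add_diagonal_piecewise hA hd S).inv.diag_pos.le))

theorem log_det_add_diagonal_piecewise_submodular [Fintype ι] (hA : A.PosDef) (hd : 0 ≤ d)
    (S T : Finset ι) :
    log M[S ∪ T].det + log M[S ∩ T].det ≤ log M[S].det + log M[T].det := by
  refine union_add_inter_le_of_insert_sub_antitone (f := fun S => log M[S].det)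
    (fun X Y hXY i hiY => ?_) S T
  simp only [log_det_add_diagonal_piecewise_insert hA hd hiY,
    log_det_add_diagonal_piecewise_insert hA hd (fun h => hiY (hXY h)), add_sub_cancel_left]
  have hY := (posDef_add_diagonal_piecewise hA hd Y).inv.diag_pos (i := i)
  exact log_le_log (add_pos_of_pos_of_nonneg one_pos (mul_nonneg (hd i) hY.le))
    (add_le_add_right (mul_le_mul_of_nonneg_left
      (inv_add_diagonal_piecewise_apply_self_antitone hA hd hXY i) (hd i)) 1)

end LogDetAddDiagonal

/-- Let `L` be an `n × n` real symmetric positive semidefinite matrix, `α > 0`, `ζ > 0`.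
Then `f₂(S) = log det(L + α D(S) + ζ I)` is monotone nondecreasing and submodular, where
`D(S)` is the diagonal 0/1 matrix with ones at the indices in `S`. -/
theorem logDet_monotone_and_submodular
    (n : ℕ) (L : Matrix (Fin n) (Fin n) ℝ) (hL : L.PosSemidef)
    (α ζ : ℝ) (hα : 0 < α) (hζ : 0 < ζ)
    (f₂ : Finset (Fin n) → ℝ)
    (hf₂ : ∀ S : Finset (Fin n),
      f₂ S = Real.log (Matrix.det
        (L + α • Matrix.diagonal (fun i => if i ∈ S then (1 : ℝ) else 0) + ζ • 1))) :
    (∀ S T : Finset (Fin n), S ⊆ T → f₂ S ≤ f₂ T) ∧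
      (∀ S T : Finset (Fin n), f₂ (S ∪ T) + f₂ (S ∩ T) ≤ f₂ S + f₂ T) := by
  have hA : (L + ζ • 1).PosDef := PosDef.posSemidef_add hL (PosDef.one.smul hζ)
  have hd : (0 : Fin n → ℝ) ≤ fun _ => α := fun _ => hα.le
  obtain rfl : f₂ = fun S => log (L + ζ • 1 + diagonal (S.piecewise (fun _ => α) 0)).det := by
    funext S
    rw [hf₂, add_right_comm, ← diagonal_smul]
    congr 4
    ext i
    simp [piecewise]
  exact ⟨fun S T hST => monotone_log_det_add_diagonal_piecewise hA hd hST,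
    log_det_add_diagonal_piecewise_submodular hA hd⟩
end
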